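/- arXiv:2104.05771 — 2 statements merged into one kernel-verified Lean document; each statement's English description precedes it below -/
import Mathlib

section
/- Let G = (L, R, E) be a bipartite graph with nonnegative, pairwise-distinct edge weights, let p ∈ [0,1], and let each vertex of L be colored red independently with probability p (blue otherwise), with L' the set of red vertices. Then the expected weight of the greedy matching on the subgraph induced by L' ∪ R equals p · Σ_{i=1}^m w(e_i) · Pr[v_{e_i} is active], where the sum ranges over all edges and 'active' refers to the inductive activity definition on the directed line graph determined by the random coloring. -/
/-!
An edge is in the greedy matching iff no heavier conflicting edge is. Adding a left vertex `u`
to the red set does not change the greedy choices on the edges that are heavier than every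
greedy edge at `u`; by descending induction on the weight this shows that `v_e` is active
exactly when `e ∈ Greedy(G[A ∪ {e.1}])`. Hence `e ∈ Greedy(G[A])` iff `e.1` is red and `v_e`
is active, and since activity of `v_e` does not depend on the colour of `e.1`, the two events
are independent and the expectation factors.
-/

open Finset

open scoped Classical

/-- Greedy matching with fuel: repeatedly pick the maximum-weight remaining edge and
discard all edges conflicting with it. -/
noncomputable def greedyAux {α : Type*} [DecidableEq α] (w : α → ℝ)
    (conflict : α → α → Prop) : ℕ → Finset α → Finset α
  | 0, _ => ∅
  | n + 1, F =>
    if h : F.Nonempty then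
      let e := (F.exists_max_image w h).choose
      insert e (greedyAux w conflict n (F.filter fun f => ¬ conflict e f))
    else ∅

/-- The greedy matching of an edge set `F`: process edges in decreasing order of weight,
adding an edge whenever it conflicts with no previously added edge. -/
noncomputable def greedy {α : Type*} [DecidableEq α] (w : α → ℝ)
    (conflict : α → α → Prop) (F : Finset α) : Finset α :=
  greedyAux w conflict F.card F

/-- Two edges of a bipartite graph conflict iff they share an endpoint. -/
def bconf {L R : Type*} (e f : L × R) : Prop := e.1 = f.1 ∨ e.2 = f.2

/-- The edge set of the subgraph `G[U ∪ R]` induced by a set `U` of left vertices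
(together with the whole right side). -/
def subL {L R : Type*} [DecidableEq L] (E : Finset (L × R)) (U : Finset L) :
    Finset (L × R) :=
  E.filter fun e => e.1 ∈ U

/-- Expectation of `f` over a random subset of `s` containing each element
independently with probability `p`. -/
noncomputable def expSubsets {ι : Type*} (p : ℝ) (s : Finset ι) (f : Finset ι → ℝ) : ℝ :=
  ∑ A ∈ s.powerset, p ^ A.card * (1 - p) ^ (s.card - A.card) * f A

/-- A set of edges is a matching if no two distinct edges conflict. -/
def isMatching {α : Type*} (conflict : α → α → Prop) (M : Finset α) : Prop :=
  ∀ e ∈ M, ∀ f ∈ M, e ≠ f → ¬ conflict e f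

/-- `OPT`: the maximum total weight of a matching contained in the edge set `E`. -/
noncomputable def optWeight {α : Type*} (w : α → ℝ) (conflict : α → α → Prop)
    (E : Finset α) : ℝ :=
  (E.powerset.filter fun M => isMatching conflict M).sup'
    ⟨∅, Finset.mem_filter.mpr ⟨Finset.empty_mem_powerset _,
        fun e he => absurd he (Finset.notMem_empty e)⟩⟩
    (fun M => ∑ e ∈ M, w e)

/-- One step of the greedy-based online algorithm with sample `L'`: the arriving
vertex `u` gets as candidate the edge incident to `u` in `Greedy(G[L' ∪ {u}])`, and
the candidate edge is added if its right endpoint is not yet matched. -/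
noncomputable def stepB {L R : Type*} [DecidableEq L] [DecidableEq R]
    (E : Finset (L × R)) (w : L × R → ℝ) (L' : Finset L)
    (M : Finset (L × R)) (u : L) : Finset (L × R) :=
  M ∪ (greedy w bconf (subL E (insert u L'))).filter
      (fun e => e.1 = u ∧ ∀ f ∈ M, f.2 ≠ e.2)

/-- The output matching of the greedy-based online algorithm with sample `L'`,
when the online vertices arrive in the order given by `order`. -/
noncomputable def runB {L R : Type*} [DecidableEq L] [DecidableEq R]
    (E : Finset (L × R)) (w : L × R → ℝ) (L' : Finset L) (order : List L) :
    Finset (L × R) :=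
  order.foldl (stepB E w L') ∅

theorem Finset.induction_on_heavier {α : Type*} (F : Finset α) (w : α → ℝ) {P : α → Prop}
    (h : ∀ e ∈ F, (∀ f ∈ F, w e < w f → P f) → P e) : ∀ e ∈ F, P e := by
  have hwf : (F : Set α).WellFoundedOn (fun a b => w a > w b) :=
    Set.wellFoundedOn_image.mp ((F.finite_toSet.image w).wellFoundedOn (r := (· > ·)))
  exact fun e he => hwf.induction he fun y hy ih => h y hy fun f hf hlt => ih f hf hlt

section Greedy

variable {α : Type*} {w : α → ℝ} {c : α → α → Prop}

lemma filter_not_conflict_ssubset (hrefl : ∀ a, c a a) {F : Finset α} {e : α} (he : e ∈ F) :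
    F.filter (fun f => ¬ c e f) ⊂ F :=
  filter_ssubset.2 ⟨e, he, not_not.2 (hrefl e)⟩

variable [DecidableEq α]

lemma greedyAux_succ_of_nonempty (n : ℕ) {F : Finset α} (hF : F.Nonempty) :
    greedyAux w c (n + 1) F = insert (F.exists_max_image w hF).choose
      (greedyAux w c n (F.filter fun f => ¬ c (F.exists_max_image w hF).choose f)) := by
  rw [greedyAux, dif_pos hF]

lemma greedyAux_eq_greedy (hrefl : ∀ a, c a a) (n : ℕ) :
    ∀ F : Finset α, F.card ≤ n → greedyAux w c n F = greedy w c F := by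
  induction n using Nat.strong_induction_on with
  | _ n ih =>
    intro F hn
    obtain rfl | hF := F.eq_empty_or_nonempty
    · cases n <;> simp [greedy, greedyAux]
    obtain ⟨k, hk⟩ : ∃ k, F.card = k + 1 := Nat.exists_eq_succ_of_ne_zero hF.card_pos.ne'
    obtain ⟨m, rfl⟩ : ∃ m, n = m + 1 := Nat.exists_eq_succ_of_ne_zero (by omega)
    have hlt := card_lt_card (filter_not_conflict_ssubset hrefl
      (F.exists_max_image w hF).choose_spec.1)
    rw [greedy, hk, greedyAux_succ_of_nonempty _ hF, greedyAux_succ_of_nonempty _ hF,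
      ih m (by omega) _ (by omega), ih k (by omega) _ (by omega)]

lemma greedy_eq_insert (hrefl : ∀ a, c a a) {F : Finset α} (hF : F.Nonempty) :
    greedy w c F = insert (F.exists_max_image w hF).choose
      (greedy w c (F.filter fun f => ¬ c (F.exists_max_image w hF).choose f)) := by
  obtain ⟨k, hk⟩ : ∃ k, F.card = k + 1 := Nat.exists_eq_succ_of_ne_zero hF.card_pos.ne'
  have hlt := card_lt_card (filter_not_conflict_ssubset hrefl
    (F.exists_max_image w hF).choose_spec.1)
  rw [greedy, hk, greedyAux_succ_of_nonempty _ hF, greedyAux_eq_greedy hrefl _ _ (by omega)]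

lemma greedyAux_subset (n : ℕ) : ∀ F : Finset α, greedyAux w c n F ⊆ F := by
  induction n with
  | zero => simp [greedyAux]
  | succ n ih =>
    intro F
    obtain rfl | hF := F.eq_empty_or_nonempty
    · simp [greedyAux]
    rw [greedyAux_succ_of_nonempty _ hF]
    exact insert_subset (F.exists_max_image w hF).choose_spec.1
      ((ih _).trans (filter_subset _ _))

lemma greedy_subset (F : Finset α) : greedy w c F ⊆ F := greedyAux_subset _ F

lemma mem_greedy_iff (hrefl : ∀ a, c a a) (hsymm : ∀ a b, c a b → c b a) {F : Finset α}
    (hinj : Set.InjOn w F) (e : α) :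
    e ∈ greedy w c F ↔ e ∈ F ∧ ∀ f ∈ F, w e < w f → c e f → f ∉ greedy w c F := by
  induction F using Finset.strongInduction generalizing e with
  | H F ih =>
  obtain rfl | hF := F.eq_empty_or_nonempty
  · simp [greedy, greedyAux]
  obtain ⟨hmF, hmax⟩ := (F.exists_max_image w hF).choose_spec
  set m := (F.exists_max_image w hF).choose
  have hF' := filter_not_conflict_ssubset hrefl hmF
  have ih' := ih _ hF' (hinj.mono (coe_subset.2 hF'.subset))
  rw [greedy_eq_insert hrefl hF]
  simp only [mem_insert, not_or]
  constructor
  · rintro (rfl | he)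
    · exact ⟨hmF, fun f hf hlt _ => absurd (hmax f hf) (not_le.2 hlt)⟩
    obtain ⟨heF', hcond⟩ := (ih' e).1 he
    refine ⟨hF'.subset heF', fun f hf hlt hef => ⟨?_, fun hf' => ?_⟩⟩
    · rintro rfl
      exact (mem_filter.1 heF').2 (hsymm _ _ hef)
    · exact hcond f (greedy_subset _ hf') hlt hef hf'
  · rintro ⟨heF, hcond⟩
    by_cases hem : e = m
    · exact .inl hem
    have hlt : w e < w m := (hmax e heF).lt_of_ne fun h => hem (hinj heF hmF h)
    have hce : ¬ c m e := fun h => (hcond m hmF hlt (hsymm _ _ h)).1 rfl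
    refine .inr ((ih' e).2 ⟨mem_filter.2 ⟨heF, hce⟩, fun f hf hlt' hef => ?_⟩)
    exact (hcond f (hF'.subset hf) hlt' hef).2

lemma mem_greedy_filter_iff_of_heavier (hrefl : ∀ a, c a a) (hsymm : ∀ a b, c a b → c b a)
    {F : Finset α} (hinj : Set.InjOn w F) (P : α → Prop) [DecidablePred P] {f : α} (hPf : ¬ P f)
    (hle : ∀ g ∈ greedy w c F, P g → w g ≤ w f) :
    f ∈ greedy w c (F.filter fun g => ¬ P g) ↔ f ∈ greedy w c F := by
  by_cases hf : f ∈ F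
  swap
  · exact iff_of_false (fun h => hf (filter_subset _ _ (greedy_subset _ h)))
      (fun h => hf (greedy_subset _ h))
  revert hPf hle
  refine F.induction_on_heavier w (P := fun f => ¬ P f →
    (∀ g ∈ greedy w c F, P g → w g ≤ w f) →
      (f ∈ greedy w c (F.filter fun g => ¬ P g) ↔ f ∈ greedy w c F)) ?_ f hf
  intro f hf ih hPf hle
  have ih' : ∀ g ∈ F, w f < w g → ¬ P g →
      (g ∈ greedy w c (F.filter fun g => ¬ P g) ↔ g ∈ greedy w c F) :=
    fun g hg hlt hPg => ih g hg hlt hPg fun g' hg' hPg' => (hle g' hg' hPg').trans hlt.le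
  rw [mem_greedy_iff hrefl hsymm (hinj.mono (coe_subset.2 (filter_subset _ _))),
    mem_greedy_iff hrefl hsymm hinj]
  simp only [mem_filter, and_imp]
  constructor
  · rintro ⟨⟨hf, -⟩, h⟩
    refine ⟨hf, fun g hg hlt hfg hgM => ?_⟩
    by_cases hPg : P g
    · exact absurd (hle g hgM hPg) (not_le.2 hlt)
    · exact h g hg hPg hlt hfg ((ih' g hg hlt hPg).2 hgM)
  · rintro ⟨hf, h⟩
    exact ⟨⟨hf, hPf⟩, fun g hg hPg hlt hfg hgM => h g hg hlt hfg ((ih' g hg hlt hPg).1 hgM)⟩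

end Greedy

lemma bconf_refl {L R : Type*} (e : L × R) : bconf e e := .inl rfl

lemma bconf_symm {L R : Type*} (e f : L × R) : bconf e f → bconf f e :=
  Or.imp Eq.symm Eq.symm

section Bipartite

variable {L R : Type*} [DecidableEq L] {E : Finset (L × R)} {w : L × R → ℝ}

lemma subL_eq_filter_of_notMem {A : Finset L} {u : L} (hu : u ∉ A) :
    subL E A = (subL E (insert u A)).filter fun g => ¬ g.1 = u := by
  ext g
  simp only [subL, mem_filter, mem_insert]
  constructor
  · rintro ⟨hg, hgA⟩
    exact ⟨⟨hg, .inr hgA⟩, fun h => hu (h ▸ hgA)⟩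
  · rintro ⟨⟨hg, hgA⟩, hgu⟩
    exact ⟨hg, hgA.resolve_left hgu⟩

variable [DecidableEq R]

lemma mem_greedy_subL_iff_insert (hwinj : Set.InjOn w E) {A : Finset L} {u : L}
    {f : L × R} (hf : f.1 ∈ A)
    (hle : ∀ g ∈ greedy w bconf (subL E (insert u A)), g.1 = u → w g ≤ w f) :
    f ∈ greedy w bconf (subL E A) ↔ f ∈ greedy w bconf (subL E (insert u A)) := by
  by_cases hu : u ∈ A
  · rw [insert_eq_of_mem hu]
  rw [subL_eq_filter_of_notMem hu]
  exact mem_greedy_filter_iff_of_heavier bconf_refl bconf_symm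
    (hwinj.mono (coe_subset.2 (filter_subset _ _))) (fun g => g.1 = u) (fun h => hu (h ▸ hf))
    hle

def IsActivity (E : Finset (L × R)) (w : L × R → ℝ) (active : Finset L → L × R → Prop) :
    Prop :=
  ∀ A : Finset L, ∀ e ∈ E, (active A e ↔
    (∀ f ∈ E, w e < w f → f.1 = e.1 → ¬ active A f) ∧
    (∀ f ∈ E, w e < w f → (f.1 = e.1 ∨ f.2 = e.2) → ¬ (active A f ∧ f.1 ∈ A)))

variable {active : Finset L → L × R → Prop}

lemma active_iff_mem_greedy (hwinj : Set.InjOn w E) (hact : IsActivity E w active) :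
    ∀ e ∈ E, ∀ A : Finset L,
      (active A e ↔ e ∈ greedy w bconf (subL E (insert e.1 A))) := by
  refine E.induction_on_heavier w fun e he ih A => ?_
  set B := subL E (insert e.1 A)
  have ihB : ∀ f ∈ E, w e < w f → f.1 = e.1 → (active A f ↔ f ∈ greedy w bconf B) :=
    fun f hf hlt h => by rw [ih f hf hlt A, h]
  have ihA : ∀ f ∈ E, w e < w f → f.1 ∈ A →
      (active A f ↔ f ∈ greedy w bconf (subL E A)) :=
    fun f hf hlt h => by rw [ih f hf hlt A, insert_eq_of_mem h]
  have hBE : B ⊆ E := filter_subset _ _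
  have heB : e ∈ B := mem_filter.2 ⟨he, mem_insert_self _ _⟩
  rw [hact A e he, mem_greedy_iff bconf_refl bconf_symm (hwinj.mono (coe_subset.2 hBE)),
    and_iff_right heB]
  constructor
  · rintro ⟨hown, hshared⟩ f hf hlt hef hfM
    obtain ⟨hfE, hf1⟩ := mem_filter.1 hf
    rcases mem_insert.1 hf1 with hfe | hfA
    · exact hown f hfE hlt hfe ((ihB f hfE hlt hfe).2 hfM)
    have hle : ∀ g ∈ greedy w bconf B, g.1 = e.1 → w g ≤ w f := fun g hg hge =>
      le_of_not_gt fun hfg => hown g (hBE (greedy_subset _ hg)) (hlt.trans hfg)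
        hge ((ihB g (hBE (greedy_subset _ hg)) (hlt.trans hfg) hge).2 hg)
    exact hshared f hfE hlt (bconf_symm _ _ hef)
      ⟨(ihA f hfE hlt hfA).2 ((mem_greedy_subL_iff_insert hwinj hfA hle).2 hfM), hfA⟩
  · intro h
    refine ⟨fun f hfE hlt hfe hf => h f (mem_filter.2 ⟨hfE, hfe ▸ mem_insert_self _ _⟩) hlt
      (.inl hfe.symm) ((ihB f hfE hlt hfe).1 hf), ?_⟩
    rintro f hfE hlt hfe ⟨hf, hfA⟩
    have hle : ∀ g ∈ greedy w bconf B, g.1 = e.1 → w g ≤ w f := fun g hg hge =>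
      le_of_not_gt fun hfg => h g (greedy_subset _ hg) (hlt.trans hfg) (.inl hge.symm) hg
    exact h f (mem_filter.2 ⟨hfE, mem_insert_of_mem hfA⟩) hlt (bconf_symm _ _ hfe)
      ((mem_greedy_subL_iff_insert hwinj hfA hle).1 ((ihA f hfE hlt hfA).1 hf))

lemma greedy_subL_eq_filter_active (hwinj : Set.InjOn w E) (hact : IsActivity E w active)
    (A : Finset L) :
    greedy w bconf (subL E A) = E.filter fun e => e.1 ∈ A ∧ active A e := by
  ext e
  rw [mem_filter]
  constructor
  · intro h
    obtain ⟨he, heA⟩ := mem_filter.1 (greedy_subset _ h)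
    rw [active_iff_mem_greedy hwinj hact e he, insert_eq_of_mem heA]
    exact ⟨he, heA, h⟩
  · rintro ⟨he, heA, h⟩
    rwa [active_iff_mem_greedy hwinj hact e he, insert_eq_of_mem heA] at h

lemma active_insert_iff (hwinj : Set.InjOn w E) (hact : IsActivity E w active)
    {e : L × R} (he : e ∈ E) (A : Finset L) : active (insert e.1 A) e ↔ active A e := by
  rw [active_iff_mem_greedy hwinj hact e he, active_iff_mem_greedy hwinj hact e he,
    insert_idem]

end Bipartite

section Expectation

variable {ι : Type*} (p : ℝ) (s : Finset ι)

lemma expSubsets_sum {κ : Type*} (I : Finset κ) (f : κ → Finset ι → ℝ) :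
    expSubsets p s (fun A => ∑ i ∈ I, f i A) = ∑ i ∈ I, expSubsets p s (f i) := by
  simp only [expSubsets, mul_sum]
  exact sum_comm

lemma expSubsets_const_mul (a : ℝ) (f : Finset ι → ℝ) :
    expSubsets p s (fun A => a * f A) = a * expSubsets p s f := by
  simp only [expSubsets, mul_sum]
  exact sum_congr rfl fun _ _ => mul_left_comm _ _ _

lemma expSubsets_ite_mem [DecidableEq ι] {x : ι} (hx : x ∈ s) (g : Finset ι → ℝ)
    (hg : ∀ A, g (insert x A) = g A) :
    expSubsets p s (fun A => if x ∈ A then g A else 0) = p * expSubsets p s g := by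
  rw [← insert_erase hx]
  set t := s.erase x
  have hxt : x ∉ t := notMem_erase x s
  have hcard : (insert x t).card = t.card + 1 := card_insert_of_notMem hxt
  have hxA : ∀ A ∈ t.powerset, x ∉ A := fun A hA h => hxt (mem_powerset.1 hA h)
  have h0 : ∑ A ∈ t.powerset, p ^ A.card * (1 - p) ^ (t.card + 1 - A.card) *
      (if x ∈ A then g A else 0) = 0 :=
    sum_eq_zero fun A hA => by rw [if_neg (hxA A hA), mul_zero]
  unfold expSubsets
  rw [sum_powerset_insert hxt, sum_powerset_insert hxt, hcard, h0, zero_add, mul_add,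
    mul_sum, mul_sum, ← sum_add_distrib]
  refine sum_congr rfl fun A hA => ?_
  have hAt : A.card ≤ t.card := card_le_card (mem_powerset.1 hA)
  beta_reduce
  rw [if_pos (mem_insert_self x A), hg, card_insert_of_notMem (hxA A hA),
    show t.card + 1 - A.card = t.card - A.card + 1 by omega, Nat.add_sub_add_right]
  ring

end Expectation

theorem stmt1_general {L R : Type*} [Fintype L] [DecidableEq L] [DecidableEq R]
    (E : Finset (L × R)) (w : L × R → ℝ)
    (hwinj : Set.InjOn w ↑E)
    (p : ℝ)
    (active : Finset L → L × R → Prop)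
    (hact : ∀ A : Finset L, ∀ e ∈ E, (active A e ↔
      (∀ f ∈ E, w e < w f → f.1 = e.1 → ¬ active A f) ∧
      (∀ f ∈ E, w e < w f → (f.1 = e.1 ∨ f.2 = e.2) → ¬ (active A f ∧ f.1 ∈ A)))) :
    expSubsets p Finset.univ (fun A => ∑ e ∈ greedy w bconf (subL E A), w e)
      = p * ∑ e ∈ E, w e *
          expSubsets p Finset.univ (fun A => if active A e then (1 : ℝ) else 0) := by
  have hsum : ∀ A : Finset L, ∑ e ∈ greedy w bconf (subL E A), w e =
      ∑ e ∈ E, if e.1 ∈ A then w e * (if active A e then 1 else 0) else 0 := fun A => by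
    rw [greedy_subL_eq_filter_active hwinj hact, sum_filter]
    refine sum_congr rfl fun e _ => ?_
    by_cases heA : e.1 ∈ A <;> by_cases he : active A e <;> simp [heA, he]
  simp_rw [hsum]
  rw [expSubsets_sum, mul_sum]
  refine sum_congr rfl fun e he => ?_
  rw [expSubsets_ite_mem p _ (mem_univ e.1) _ fun A => by
      rw [active_insert_iff hwinj hact he], expSubsets_const_mul, mul_left_comm]

/-- When each left vertex is colored red independently with probability
`p` (the red set being the sample `L'`), the expected weight of the greedy matching on
`G[L' ∪ R]` equals `p · Σ_e w(e) · Pr[v_e is active]`, where for each coloring `A` the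
predicate `active A` is the inductive activity notion on the directed line graph. -/
theorem stmt1 {L R : Type*} [Fintype L] [DecidableEq L] [DecidableEq R]
    (E : Finset (L × R)) (w : L × R → ℝ)
    (hw0 : ∀ e ∈ E, 0 ≤ w e) (hwinj : Set.InjOn w ↑E)
    (p : ℝ) (hp : p ∈ Set.Icc (0 : ℝ) 1)
    (active : Finset L → L × R → Prop)
    (hact : ∀ A : Finset L, ∀ e ∈ E, (active A e ↔
      (∀ f ∈ E, w e < w f → f.1 = e.1 → ¬ active A f) ∧
      (∀ f ∈ E, w e < w f → (f.1 = e.1 ∨ f.2 = e.2) → ¬ (active A f ∧ f.1 ∈ A)))) :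
    expSubsets p Finset.univ (fun A => ∑ e ∈ greedy w bconf (subL E A), w e)
      = p * ∑ e ∈ E, w e *
          expSubsets p Finset.univ (fun A => if active A e then (1 : ℝ) else 0) :=
  stmt1_general E w hwinj p active hact
end

section
/- Let G = (L, R, E) be a bipartite graph with nonnegative, pairwise-distinct edge weights, let p ∈ [0,1], and let L' ⊆ L contain each vertex of L independently with probability p. Consider the greedy-based online algorithm: for each u ∈ L \ L', its candidate edge is the edge incident to u in Greedy(G[L' ∪ {u}]) (if any); the online vertices L \ L' are processed in some order, and a candidate edge (u, r) is added to the output matching M if r is not already matched in M. Then for every rule assigning an arrival order to L \ L' (possibly depending on L'), E[w(M)] ≥ (p(1−p)/(1+p)) · OPT(G). That is, the greedy-based online algorithm with sampling probability p is order-oblivious p(1−p)/(1+p)-competitive for edge-weighted bipartite matching with one-sided vertex arrivals. -/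
open Finset

open scoped Classical

namespace Stmt5Aux
set_option linter.unusedSectionVars false

lemma bconf_refl {L R : Type*} (e : L × R) : bconf e e := Or.inl rfl

section Greedy
variable {α : Type*} [DecidableEq α] (w : α → ℝ) (c : α → α → Prop)

lemma greedyAux_empty (n : ℕ) : greedyAux w c n (∅ : Finset α) = ∅ := by
  cases n <;> simp [greedyAux]

lemma greedyAux_subset : ∀ (n : ℕ) (F : Finset α), greedyAux w c n F ⊆ F := by
  intro n
  induction n with
  | zero => intro F; simp [greedyAux]
  | succ n ih =>
    intro F
    by_cases h : F.Nonempty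
    · rw [greedyAux]
      simp only [dif_pos h]
      intro x hx
      rcases mem_insert.mp hx with h1 | h2
      · rw [h1]; exact (F.exists_max_image w h).choose_spec.1
      · exact (filter_subset _ _) (ih _ h2)
    · rw [greedyAux]; simp [dif_neg h]

set_option linter.unusedSectionVars false in
lemma filter_card_lt (hc : ∀ a, c a a) {F : Finset α} {e : α} (he : e ∈ F) :
    (F.filter fun f => ¬ c e f).card < F.card := by
  refine card_lt_card ⟨filter_subset _ _, fun hsub => ?_⟩
  have := mem_filter.mp (hsub he)
  exact this.2 (hc e)

lemma greedyAux_congr (hc : ∀ a, c a a) :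
    ∀ (n m : ℕ) (F : Finset α), F.card ≤ n → F.card ≤ m →
      greedyAux w c n F = greedyAux w c m F := by
  intro n
  induction n with
  | zero =>
    intro m F hn _
    have : F = ∅ := card_eq_zero.mp (Nat.le_zero.mp hn)
    subst this
    simp [greedyAux_empty]
  | succ n ih =>
    intro m F hn hm
    by_cases h : F.Nonempty
    · have hFc : F.card ≠ 0 := by
        simpa [card_eq_zero, ← Finset.not_nonempty_iff_eq_empty] using h.card_pos.ne'
      obtain ⟨m', rfl⟩ : ∃ m', m = m' + 1 := by
        cases m with
        | zero => exact absurd (Nat.le_zero.mp hm) (by simpa [card_eq_zero, Finset.not_nonempty_iff_eq_empty] using fun hF => h.ne_empty hF)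
        | succ m' => exact ⟨m', rfl⟩
      rw [greedyAux, greedyAux]
      simp only [dif_pos h]
      have hcard := filter_card_lt (c := c) hc (e := (F.exists_max_image w h).choose) (F.exists_max_image w h).choose_spec.1
      congr 1
      exact ih _ _ (by omega) (by omega)
    · rw [Finset.not_nonempty_iff_eq_empty] at h
      subst h
      simp [greedyAux_empty]

lemma greedy_eq_insert (hc : ∀ a, c a a) {F : Finset α} {e : α}
    (he : e ∈ F) (hmax : ∀ f ∈ F, w f ≤ w e)
    (huniq : ∀ f ∈ F, w f = w e → f = e) :
    greedy w c F = insert e (greedy w c (F.filter fun f => ¬ c e f)) := by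
  have h : F.Nonempty := ⟨e, he⟩
  obtain ⟨k, hk⟩ : ∃ k, F.card = k + 1 := by
    have := h.card_pos
    exact ⟨F.card - 1, by omega⟩
  unfold greedy
  rw [hk, greedyAux]
  simp only [dif_pos h]
  have hce : (F.exists_max_image w h).choose = e := by
    refine huniq _ (F.exists_max_image w h).choose_spec.1 ?_
    exact le_antisymm (hmax _ (F.exists_max_image w h).choose_spec.1)
      ((F.exists_max_image w h).choose_spec.2 e he)
  rw [hce]
  congr 1
  have hlt := filter_card_lt c hc he
  exact greedyAux_congr w c hc _ _ _ (by omega) le_rfl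

lemma greedy_subset (F : Finset α) : greedy w c F ⊆ F := greedyAux_subset w c _ F

end Greedy

section Bip

variable {L R : Type*} [DecidableEq L] [DecidableEq R] (w : L × R → ℝ)

lemma mem_subL {E : Finset (L × R)} {U : Finset L} {e : L × R} :
    e ∈ subL E U ↔ e ∈ E ∧ e.1 ∈ U := mem_filter

lemma subL_subset (E : Finset (L × R)) (U : Finset L) : subL E U ⊆ E := filter_subset _ _

lemma subL_filter (E' : Finset (L × R)) (P : L × R → Prop) (S : Finset L) :
    (subL E' S).filter P = subL (E'.filter P) S := by
  ext f
  simp only [subL, mem_filter]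
  tauto

lemma subL_insert_free {E'' : Finset (L × R)} {u₀ : L}
    (hfree : ∀ f ∈ E'', f.1 ≠ u₀) (S : Finset L) :
    subL E'' (insert u₀ S) = subL E'' S := by
  ext f
  simp only [subL, mem_filter, mem_insert]
  constructor
  · rintro ⟨hf, h | h⟩
    · exact absurd h (hfree f hf)
    · exact ⟨hf, h⟩
  · rintro ⟨hf, h⟩; exact ⟨hf, Or.inr h⟩

lemma greedy_subL_eq {E E' : Finset (L × R)} (hsub : E' ⊆ E) (hinj : Set.InjOn w ↑E)
    {em : L × R} (hem : em ∈ E') (hmax : ∀ f ∈ E', w f ≤ w em) {S : Finset L} (hS : em.1 ∈ S) :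
    greedy w bconf (subL E' S)
      = insert em (greedy w bconf (subL (E'.filter fun f => ¬ bconf em f) S)) := by
  have h1 : em ∈ subL E' S := mem_subL.mpr ⟨hem, hS⟩
  rw [greedy_eq_insert w bconf bconf_refl h1
      (fun f hf => hmax f (subL_subset _ _ hf))
      (fun f hf hwf => hinj (hsub (subL_subset _ _ hf)) (hsub hem) hwf)]
  have h2 : (subL E' S).filter (fun f => ¬ bconf em f)
      = subL (E'.filter fun f => ¬ bconf em f) S := by
    ext f
    simp only [subL, mem_filter]
    tauto
  rw [h2]

end Bip

section DsetSec

variable {L R : Type*} [DecidableEq L] [DecidableEq R]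

noncomputable def Dset (E : Finset (L × R)) (w : L × R → ℝ) (A : Finset L) (r : R) :
    Finset (L × R) :=
  E.filter fun e => e.2 = r ∧ e.1 ∉ A ∧ e ∈ greedy w bconf (subL E (insert e.1 A))

noncomputable def Yval (E : Finset (L × R)) (w : L × R → ℝ) (A : Finset L) (r : R) : ℝ :=
  if h : (Dset E w A r).Nonempty then (Dset E w A r).inf' h w else 0

noncomputable def tval (E : Finset (L × R)) (w : L × R → ℝ) (A : Finset L) : ℝ :=
  ∑ r ∈ E.image Prod.snd, Yval E w A r

variable {w : L × R → ℝ} {E E' : Finset (L × R)} {A : Finset L} {r : R}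

lemma Dset_subset : Dset E w A r ⊆ E := filter_subset _ _

lemma mem_Dset {e : L × R} :
    e ∈ Dset E w A r ↔ e ∈ E ∧ e.2 = r ∧ e.1 ∉ A ∧
      e ∈ greedy w bconf (subL E (insert e.1 A)) := mem_filter

lemma Yval_nonneg (hw0 : ∀ e ∈ E, 0 ≤ w e) : 0 ≤ Yval E w A r := by
  unfold Yval
  split
  · next h =>
    obtain ⟨b, hb, hval⟩ := Finset.exists_mem_eq_inf' h w
    rw [hval]
    exact hw0 b (Dset_subset hb)
  · exact le_refl 0

lemma Yval_le_of_mem {e : L × R} (he : e ∈ Dset E w A r) : Yval E w A r ≤ w e := by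
  unfold Yval
  rw [dif_pos ⟨e, he⟩]
  exact inf'_le _ he

lemma Yval_zero_of_not_snd (hr : r ∉ E.image Prod.snd) : Yval E w A r = 0 := by
  unfold Yval
  rw [dif_neg]
  rintro ⟨e, he⟩
  obtain ⟨heE, h2, -⟩ := mem_Dset.mp he
  exact hr (mem_image.mpr ⟨e, heE, h2⟩)

end DsetSec

section Struct

variable {L R : Type*} [DecidableEq L] [DecidableEq R]
variable {w : L × R → ℝ} {E E' : Finset (L × R)} {A : Finset L} {r : R}

lemma subL_eq_E0 {em : L × R} {U : Finset L} (hU : em.1 ∉ U) :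
    subL E' U = subL (E'.filter fun f => f.1 ≠ em.1) U := by
  ext f
  simp only [subL, mem_filter]
  constructor
  · rintro ⟨hf, hfU⟩
    exact ⟨⟨hf, fun h => hU (h ▸ hfU)⟩, hfU⟩
  · rintro ⟨⟨hf, -⟩, hfU⟩
    exact ⟨hf, hfU⟩

lemma Dset_R1 (hsub : E' ⊆ E) (hinj : Set.InjOn w ↑E) {em : L × R} (hem : em ∈ E')
    (hmax : ∀ f ∈ E', w f ≤ w em) (hA : em.1 ∈ A) (r : R) :
    Dset E' w A r = Dset (E'.filter fun f => ¬ bconf em f) w A r := by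
  ext e
  simp only [mem_Dset]
  constructor
  · rintro ⟨heE, h2, h1A, hg⟩
    have hne : e.1 ≠ em.1 := fun h => h1A (h ▸ hA)
    rw [greedy_subL_eq (w := w) hsub hinj hem hmax (mem_insert_of_mem hA)] at hg
    rcases mem_insert.mp hg with h | h
    · exact absurd (congrArg Prod.fst h) hne
    · have heE1 : e ∈ E'.filter fun f => ¬ bconf em f :=
        subL_subset _ _ (greedy_subset _ _ _ h)
      exact ⟨heE1, h2, h1A, h⟩
  · rintro ⟨heE1, h2, h1A, hg⟩
    refine ⟨filter_subset _ _ heE1, h2, h1A, ?_⟩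
    rw [greedy_subL_eq (w := w) hsub hinj hem hmax (mem_insert_of_mem hA)]
    exact mem_insert_of_mem hg

lemma Dset_insert_free {E'' : Finset (L × R)} {u₀ : L}
    (hfree : ∀ f ∈ E'', f.1 ≠ u₀) (A : Finset L) (r : R) :
    Dset E'' w (insert u₀ A) r = Dset E'' w A r := by
  ext e
  simp only [mem_Dset]
  constructor
  · rintro ⟨he, h2, h1, hg⟩
    refine ⟨he, h2, fun hmem => h1 (mem_insert_of_mem hmem), ?_⟩
    rwa [Finset.insert_comm, subL_insert_free hfree] at hg
  · rintro ⟨he, h2, h1, hg⟩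
    have hne : e.1 ≠ u₀ := hfree e he
    refine ⟨he, h2, ?_, ?_⟩
    · intro hmem
      rcases mem_insert.mp hmem with h | h
      · exact hne h
      · exact h1 h
    · rwa [Finset.insert_comm, subL_insert_free hfree]

lemma not_mem_Dset_shareL (hsub : E' ⊆ E) (hinj : Set.InjOn w ↑E) {em : L × R}
    (hem : em ∈ E') (hmax : ∀ f ∈ E', w f ≤ w em) {e : L × R}
    (he1 : e.1 = em.1) (hee : e ≠ em) : e ∉ Dset E' w A r := by
  rintro he
  obtain ⟨heE, h2, h1A, hg⟩ := mem_Dset.mp he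
  have hS : em.1 ∈ insert e.1 A := by
    rw [← he1]; exact mem_insert_self _ _
  rw [greedy_subL_eq (w := w) hsub hinj hem hmax hS] at hg
  rcases mem_insert.mp hg with h | h
  · exact hee h
  · have heE1 : e ∈ E'.filter fun f => ¬ bconf em f :=
      subL_subset _ _ (greedy_subset _ _ _ h)
    exact (mem_filter.mp heE1).2 (Or.inl he1.symm)

lemma Dset_mem_iff_E0 {em : L × R} (hA : em.1 ∉ A) {e : L × R} (he1 : e.1 ≠ em.1) :
    e ∈ Dset E' w A r ↔ e ∈ Dset (E'.filter fun f => f.1 ≠ em.1) w A r := by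
  have hU : em.1 ∉ insert e.1 A := by
    intro h
    rcases mem_insert.mp h with h | h
    · exact he1 h.symm
    · exact hA h
  simp only [mem_Dset, mem_filter]
  rw [← subL_eq_E0 (em := em) hU]
  tauto

lemma Dset_R2a (hsub : E' ⊆ E) (hinj : Set.InjOn w ↑E) {em : L × R} (hem : em ∈ E')
    (hmax : ∀ f ∈ E', w f ≤ w em) (hA : em.1 ∉ A) (hr : r ≠ em.2) :
    Dset E' w A r = Dset (E'.filter fun f => f.1 ≠ em.1) w A r := by
  ext e
  by_cases he1 : e.1 = em.1
  · constructor
    · intro he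
      by_cases hee : e = em
      · subst hee
        exact absurd (mem_Dset.mp he).2.1 (fun h => hr h.symm)
      · exact absurd he (not_mem_Dset_shareL hsub hinj hem hmax he1 hee)
    · intro he
      have := mem_filter.mp (mem_Dset.mp he).1
      exact absurd he1 this.2
  · exact Dset_mem_iff_E0 hA he1

lemma Dset_R2b (hsub : E' ⊆ E) (hinj : Set.InjOn w ↑E) {em : L × R} (hem : em ∈ E')
    (hmax : ∀ f ∈ E', w f ≤ w em) (hA : em.1 ∉ A) :
    Dset E' w A em.2 = insert em (Dset (E'.filter fun f => f.1 ≠ em.1) w A em.2) := by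
  ext e
  rw [mem_insert]
  by_cases hee : e = em
  · subst hee
    have hmem : e ∈ Dset E' w A e.2 := by
      refine mem_Dset.mpr ⟨hem, rfl, hA, ?_⟩
      rw [greedy_subL_eq (w := w) hsub hinj hem hmax (mem_insert_self _ _)]
      exact mem_insert_self _ _
    exact iff_of_true hmem (Or.inl rfl)
  · constructor
    · intro he
      by_cases he1 : e.1 = em.1
      · exact absurd he (not_mem_Dset_shareL hsub hinj hem hmax he1 hee)
      · exact Or.inr ((Dset_mem_iff_E0 hA he1).mp he)
    · rintro (h | h)
      · exact absurd h hee
      · have he1 : e.1 ≠ em.1 := (mem_filter.mp (mem_Dset.mp h).1).2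
        exact (Dset_mem_iff_E0 hA he1).mpr h

end Struct

section YT

variable {L R : Type*} [DecidableEq L] [DecidableEq R]
variable {w : L × R → ℝ} {E E' : Finset (L × R)} {A : Finset L} {r : R}

lemma Yval_R1 (hsub : E' ⊆ E) (hinj : Set.InjOn w ↑E) {em : L × R} (hem : em ∈ E')
    (hmax : ∀ f ∈ E', w f ≤ w em) (hA : em.1 ∈ A) (r : R) :
    Yval E' w A r = Yval (E'.filter fun f => ¬ bconf em f) w A r := by
  unfold Yval
  rw [Dset_R1 hsub hinj hem hmax hA]

lemma Yval_insert_free {E'' : Finset (L × R)} {u₀ : L}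
    (hfree : ∀ f ∈ E'', f.1 ≠ u₀) (A : Finset L) (r : R) :
    Yval E'' w (insert u₀ A) r = Yval E'' w A r := by
  unfold Yval
  rw [Dset_insert_free hfree]

lemma tval_insert_free {E'' : Finset (L × R)} {u₀ : L}
    (hfree : ∀ f ∈ E'', f.1 ≠ u₀) (A : Finset L) :
    tval E'' w (insert u₀ A) = tval E'' w A := by
  unfold tval
  exact Finset.sum_congr rfl fun r _ => Yval_insert_free hfree A r

lemma Yval_R2b (hsub : E' ⊆ E) (hinj : Set.InjOn w ↑E) {em : L × R} (hem : em ∈ E')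
    (hmax : ∀ f ∈ E', w f ≤ w em) (hA : em.1 ∉ A) :
    Yval E' w A em.2 =
      if (Dset (E'.filter fun f => f.1 ≠ em.1) w A em.2).Nonempty
      then Yval (E'.filter fun f => f.1 ≠ em.1) w A em.2 else w em := by
  unfold Yval
  rw [Dset_R2b hsub hinj hem hmax hA]
  by_cases h0 : (Dset (E'.filter fun f => f.1 ≠ em.1) w A em.2).Nonempty
  · rw [if_pos h0, dif_pos (Finset.insert_nonempty em _), dif_pos h0, Finset.inf'_insert h0]
    obtain ⟨b, hb, hval⟩ := Finset.exists_mem_eq_inf' h0 w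
    rw [hval]
    exact inf_eq_right.mpr (by
      rw [← hval]
      rw [hval]
      exact hmax b (filter_subset _ _ (Dset_subset hb)))
  · rw [if_neg h0, Finset.not_nonempty_iff_eq_empty.mp h0]
    simp

lemma snds_subset_of_subset {E1 E2 : Finset (L × R)} (h : E1 ⊆ E2) :
    E1.image Prod.snd ⊆ E2.image Prod.snd := image_subset_image h

lemma tval_eq_sum_over (E1 : Finset (L × R)) {s : Finset R}
    (hs : E1.image Prod.snd ⊆ s) (A : Finset L) :
    tval E1 w A = ∑ r ∈ s, Yval E1 w A r := by
  unfold tval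
  exact Finset.sum_subset hs fun r _ hr => Yval_zero_of_not_snd hr

lemma tval_R1 (hsub : E' ⊆ E) (hinj : Set.InjOn w ↑E) {em : L × R} (hem : em ∈ E')
    (hmax : ∀ f ∈ E', w f ≤ w em) (hA : em.1 ∈ A) :
    tval E' w A = tval (E'.filter fun f => ¬ bconf em f) w A := by
  unfold tval
  rw [Finset.sum_congr rfl fun r _ => Yval_R1 hsub hinj hem hmax hA r]
  exact (tval_eq_sum_over _ (snds_subset_of_subset (filter_subset _ _)) A).symm

lemma Yval_R2a (hsub : E' ⊆ E) (hinj : Set.InjOn w ↑E) {em : L × R} (hem : em ∈ E')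
    (hmax : ∀ f ∈ E', w f ≤ w em) (hA : em.1 ∉ A) (hr : r ≠ em.2) :
    Yval E' w A r = Yval (E'.filter fun f => f.1 ≠ em.1) w A r := by
  unfold Yval
  rw [Dset_R2a hsub hinj hem hmax hA hr]

lemma tval_R2 (hsub : E' ⊆ E) (hinj : Set.InjOn w ↑E) {em : L × R} (hem : em ∈ E')
    (hmax : ∀ f ∈ E', w f ≤ w em) (hA : em.1 ∉ A) :
    tval E' w A = tval (E'.filter fun f => f.1 ≠ em.1) w A +
      (if (Dset (E'.filter fun f => f.1 ≠ em.1) w A em.2).Nonempty then 0 else w em) := by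
  have hρ : em.2 ∈ E'.image Prod.snd := mem_image.mpr ⟨em, hem, rfl⟩
  rw [tval_eq_sum_over (E'.filter fun f => f.1 ≠ em.1)
        (snds_subset_of_subset (filter_subset _ _)) A]
  unfold tval
  rw [← Finset.add_sum_erase _ _ hρ,
      Finset.sum_congr rfl (fun r hr => Yval_R2a hsub hinj hem hmax hA (mem_erase.mp hr).1),
      Yval_R2b hsub hinj hem hmax hA,
      ← Finset.add_sum_erase _ (fun r => Yval (E'.filter fun f => f.1 ≠ em.1) w A r) hρ]
  by_cases h0 : (Dset (E'.filter fun f => f.1 ≠ em.1) w A em.2).Nonempty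
  · rw [if_pos h0, if_pos h0]
    ring
  · rw [if_neg h0, if_neg h0]
    have hz : Yval (E'.filter fun f => f.1 ≠ em.1) w A em.2 = 0 := dif_neg h0
    rw [hz]
    ring

end YT

section Prob

variable {ι : Type*} [DecidableEq ι] {p : ℝ}

lemma expSubsets_congr {s : Finset ι} {f g : Finset ι → ℝ} (h : ∀ A ⊆ s, f A = g A) :
    expSubsets p s f = expSubsets p s g :=
  Finset.sum_congr rfl fun A hA => by rw [h A (mem_powerset.mp hA)]

lemma expSubsets_nonneg (hp0 : 0 ≤ p) (hp1 : p ≤ 1) {s : Finset ι} {f : Finset ι → ℝ}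
    (hf : ∀ A ⊆ s, 0 ≤ f A) : 0 ≤ expSubsets p s f :=
  Finset.sum_nonneg fun A hA => mul_nonneg
    (mul_nonneg (pow_nonneg hp0 _) (pow_nonneg (by linarith) _))
    (hf _ (mem_powerset.mp hA))

lemma expSubsets_mono (hp0 : 0 ≤ p) (hp1 : p ≤ 1) {s : Finset ι} {f g : Finset ι → ℝ}
    (h : ∀ A ⊆ s, f A ≤ g A) : expSubsets p s f ≤ expSubsets p s g :=
  Finset.sum_le_sum fun A hA => mul_le_mul_of_nonneg_left (h _ (mem_powerset.mp hA))
    (mul_nonneg (pow_nonneg hp0 _) (pow_nonneg (by linarith) _))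

lemma expSubsets_add {s : Finset ι} (f g : Finset ι → ℝ) :
    expSubsets p s (fun A => f A + g A) = expSubsets p s f + expSubsets p s g := by
  unfold expSubsets
  rw [← Finset.sum_add_distrib]
  exact Finset.sum_congr rfl fun A _ => by ring

lemma expSubsets_smul {s : Finset ι} (c : ℝ) (f : Finset ι → ℝ) :
    expSubsets p s (fun A => c * f A) = c * expSubsets p s f := by
  unfold expSubsets
  rw [Finset.mul_sum]
  exact Finset.sum_congr rfl fun A _ => by ring

lemma expSubsets_insert {t : Finset ι} {u₀ : ι} (hnot : u₀ ∉ t) (f : Finset ι → ℝ) :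
    expSubsets p (insert u₀ t) f
      = p * expSubsets p t (fun A => f (insert u₀ A)) + (1 - p) * expSubsets p t f := by
  unfold expSubsets
  have hdisj : Disjoint t.powerset (t.powerset.image (insert u₀)) := by
    rw [Finset.disjoint_left]
    intro A hA hA'
    obtain ⟨B, hB, hBA⟩ := mem_image.mp hA'
    have : u₀ ∈ A := hBA ▸ mem_insert_self _ _
    exact (mem_powerset.mp hA this |> hnot)
  have hinj : ∀ A ∈ t.powerset, ∀ B ∈ t.powerset, insert u₀ A = insert u₀ B → A = B := by
    intro A hA B hB hAB
    have hA' : u₀ ∉ A := fun h => hnot (mem_powerset.mp hA h)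
    have hB' : u₀ ∉ B := fun h => hnot (mem_powerset.mp hB h)
    rw [← Finset.erase_insert hA', ← Finset.erase_insert hB', hAB]
  rw [Finset.powerset_insert, Finset.sum_union hdisj, Finset.sum_image hinj]
  have hcard : (insert u₀ t).card = t.card + 1 := card_insert_of_notMem hnot
  have h1 : ∀ A ∈ t.powerset,
      p ^ A.card * (1 - p) ^ ((insert u₀ t).card - A.card) * f A
        = (1 - p) * (p ^ A.card * (1 - p) ^ (t.card - A.card) * f A) := by
    intro A hA
    have hle : A.card ≤ t.card := card_le_card (mem_powerset.mp hA)
    rw [hcard, show t.card + 1 - A.card = (t.card - A.card) + 1 by omega, pow_succ]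
    ring
  have h2 : ∀ A ∈ t.powerset,
      p ^ (insert u₀ A).card * (1 - p) ^ ((insert u₀ t).card - (insert u₀ A).card)
          * f (insert u₀ A)
        = p * (p ^ A.card * (1 - p) ^ (t.card - A.card) * f (insert u₀ A)) := by
    intro A hA
    have hA' : u₀ ∉ A := fun h => hnot (mem_powerset.mp hA h)
    have hle : A.card ≤ t.card := card_le_card (mem_powerset.mp hA)
    rw [card_insert_of_notMem hA', hcard,
      show t.card + 1 - (A.card + 1) = t.card - A.card by omega, pow_succ]
    ring
  rw [Finset.sum_congr rfl h1, Finset.sum_congr rfl h2, ← Finset.mul_sum, ← Finset.mul_sum]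
  ring

lemma expSubsets_split {s : Finset ι} {u₀ : ι} (hu : u₀ ∈ s) (f : Finset ι → ℝ) :
    expSubsets p s f = p * expSubsets p (s.erase u₀) (fun A => f (insert u₀ A))
      + (1 - p) * expSubsets p (s.erase u₀) f := by
  conv_lhs => rw [← insert_erase hu]
  exact expSubsets_insert (notMem_erase _ _) f

lemma expSubsets_const (c : ℝ) (s : Finset ι) : expSubsets p s (fun _ => c) = c := by
  induction s using Finset.induction_on with
  | empty => simp [expSubsets]
  | insert a s ha ih =>
    rw [expSubsets_insert ha]
    rw [ih]
    ring

lemma expSubsets_erase {s : Finset ι} {u₀ : ι} {f : Finset ι → ℝ} (hu : u₀ ∈ s)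
    (hf : ∀ A ⊆ s.erase u₀, f (insert u₀ A) = f A) :
    expSubsets p s f = expSubsets p (s.erase u₀) f := by
  rw [expSubsets_split hu f, expSubsets_congr hf]
  ring

end Prob


section Induct

variable {L R : Type*} [Fintype L] [DecidableEq L] [DecidableEq R]
variable {w : L × R → ℝ} {E : Finset (L × R)} {p : ℝ}

lemma hitE_empty (hp1 : p ≤ 1) (r : R) :
    p ≤ expSubsets p Finset.univ
      (fun A => if (Dset (∅ : Finset (L × R)) w A r).Nonempty then (0:ℝ) else 1) := by
  have h : ∀ A ⊆ (Finset.univ : Finset L),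
      (if (Dset (∅ : Finset (L × R)) w A r).Nonempty then (0:ℝ) else 1) = 1 := by
    intro A _
    rw [if_neg]
    simp [Dset]
  rw [expSubsets_congr h, expSubsets_const]
  exact hp1

lemma hitE (hinj : Set.InjOn w ↑E) (hp0 : 0 ≤ p) (hp1 : p ≤ 1) :
    ∀ (n : ℕ) (E' : Finset (L × R)), E'.card ≤ n → E' ⊆ E → ∀ r : R,
      p ≤ expSubsets p Finset.univ
        (fun A => if (Dset E' w A r).Nonempty then (0:ℝ) else 1) := by
  intro n
  induction n with
  | zero =>
    intro E' hcard hsub r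
    have hE' : E' = ∅ := card_eq_zero.mp (Nat.le_zero.mp hcard)
    subst hE'
    exact hitE_empty hp1 r
  | succ n ih =>
    intro E' hcard hsub r
    by_cases hne : E'.Nonempty
    · obtain ⟨em, hem, hmax⟩ := E'.exists_max_image w hne
      have hfree1 : ∀ f ∈ E'.filter (fun f => ¬ bconf em f), f.1 ≠ em.1 :=
        fun f hf h => (mem_filter.mp hf).2 (Or.inl h.symm)
      have hfree0 : ∀ f ∈ E'.filter (fun f => f.1 ≠ em.1), f.1 ≠ em.1 :=
        fun f hf => (mem_filter.mp hf).2
      have hcard1 : (E'.filter (fun f => ¬ bconf em f)).card ≤ n := by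
        have : (E'.filter (fun f => ¬ bconf em f)).card < E'.card :=
          card_lt_card ⟨filter_subset _ _,
            fun hsS => ((mem_filter.mp (hsS hem)).2 (bconf_refl em))⟩
        omega
      have hcard0 : (E'.filter (fun f => f.1 ≠ em.1)).card ≤ n := by
        have : (E'.filter (fun f => f.1 ≠ em.1)).card < E'.card :=
          card_lt_card ⟨filter_subset _ _,
            fun hsS => ((mem_filter.mp (hsS hem)).2 rfl)⟩
        omega
      have hsub1 : E'.filter (fun f => ¬ bconf em f) ⊆ E := (filter_subset _ _).trans hsub
      have hsub0 : E'.filter (fun f => f.1 ≠ em.1) ⊆ E := (filter_subset _ _).trans hsub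
      rw [expSubsets_split (mem_univ em.1)]
      have hT1 : expSubsets p (Finset.univ.erase em.1)
            (fun A => if (Dset E' w (insert em.1 A) r).Nonempty then (0:ℝ) else 1)
          = expSubsets p Finset.univ
            (fun A => if (Dset (E'.filter (fun f => ¬ bconf em f)) w A r).Nonempty
              then (0:ℝ) else 1) := by
        have e1 : ∀ A ⊆ Finset.univ.erase em.1,
            (if (Dset E' w (insert em.1 A) r).Nonempty then (0:ℝ) else 1)
              = (if (Dset (E'.filter (fun f => ¬ bconf em f)) w A r).Nonempty
                then (0:ℝ) else 1) := by
          intro A _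
          rw [Dset_R1 hsub hinj hem hmax (mem_insert_self _ _) r, Dset_insert_free hfree1]
        rw [expSubsets_congr e1]
        exact (expSubsets_erase (mem_univ em.1)
          (fun A _ => by rw [Dset_insert_free hfree1])).symm
      rw [hT1]
      by_cases hrρ : r = em.2
      · have hT1' : expSubsets p Finset.univ
            (fun A => if (Dset (E'.filter (fun f => ¬ bconf em f)) w A r).Nonempty
              then (0:ℝ) else 1) = 1 := by
          have h : ∀ A ⊆ (Finset.univ : Finset L),
              (if (Dset (E'.filter (fun f => ¬ bconf em f)) w A r).Nonempty
                then (0:ℝ) else 1) = 1 := by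
            intro A _
            rw [if_neg]
            rintro ⟨e, he⟩
            obtain ⟨heE, h2, -⟩ := mem_Dset.mp he
            exact (mem_filter.mp heE).2 (Or.inr (by rw [h2, hrρ]))
          rw [expSubsets_congr h, expSubsets_const]
        rw [hT1']
        have hT0 : 0 ≤ expSubsets p (Finset.univ.erase em.1)
            (fun A => if (Dset E' w A r).Nonempty then (0:ℝ) else 1) := by
          refine expSubsets_nonneg hp0 hp1 ?_
          intro A _
          split <;> norm_num
        nlinarith
      · have hT0 : expSubsets p (Finset.univ.erase em.1)
            (fun A => if (Dset E' w A r).Nonempty then (0:ℝ) else 1)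
            = expSubsets p Finset.univ
              (fun A => if (Dset (E'.filter (fun f => f.1 ≠ em.1)) w A r).Nonempty
                then (0:ℝ) else 1) := by
          have e0 : ∀ A ⊆ Finset.univ.erase em.1,
              (if (Dset E' w A r).Nonempty then (0:ℝ) else 1)
                = (if (Dset (E'.filter (fun f => f.1 ≠ em.1)) w A r).Nonempty
                  then (0:ℝ) else 1) := by
            intro A hA
            have hAmem : em.1 ∉ A := fun h => (mem_erase.mp (hA h)).1 rfl
            rw [Dset_R2a hsub hinj hem hmax hAmem hrρ]
          rw [expSubsets_congr e0]
          exact (expSubsets_erase (mem_univ em.1)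
            (fun A _ => by rw [Dset_insert_free hfree0])).symm
        rw [hT0]
        have h1 := ih (E'.filter (fun f => ¬ bconf em f)) hcard1 hsub1 r
        have h0 := ih (E'.filter (fun f => f.1 ≠ em.1)) hcard0 hsub0 r
        nlinarith
    · rw [Finset.not_nonempty_iff_eq_empty] at hne
      subst hne
      exact hitE_empty hp1 r

end Induct

section MainInd

variable {L R : Type*} [Fintype L] [DecidableEq L] [DecidableEq R]
variable {w : L × R → ℝ} {E : Finset (L × R)} {p : ℝ}

lemma isMatching_subset {N' N : Finset (L × R)} (h : N' ⊆ N)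
    (hm : isMatching bconf N) : isMatching bconf N' :=
  fun e he f hf => hm e (h he) f (h hf)

lemma tval_empty (A : Finset L) : tval (∅ : Finset (L × R)) w A = 0 := by
  simp [tval]

lemma matching_filter_sum_le {E' N : Finset (L × R)} {em : L × R}
    (hem0 : 0 ≤ w em) (hmax : ∀ f ∈ E', w f ≤ w em) (hN : N ⊆ E')
    (hm : isMatching bconf N) (K : Finset (L × R)) (hK : K ⊆ N)
    (hP : ∀ e ∈ K, ∀ f ∈ K, bconf e f) :
    ∑ e ∈ K, w e ≤ w em := by
  rcases K.eq_empty_or_nonempty with h | ⟨e₀, he₀⟩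
  · rw [h, Finset.sum_empty]; exact hem0
  · have hsing : K = {e₀} := by
      refine Finset.eq_singleton_iff_unique_mem.mpr ⟨he₀, fun f hf => ?_⟩
      by_contra hne
      exact hm f (hK hf) e₀ (hK he₀) hne (hP f hf e₀ he₀)
    rw [hsing, Finset.sum_singleton]
    exact hmax e₀ (hN (hK he₀))

lemma mainInd (hw0 : ∀ e ∈ E, 0 ≤ w e) (hinj : Set.InjOn w ↑E)
    (hp0 : 0 ≤ p) (hp1 : p ≤ 1) :
    ∀ (n : ℕ) (E' : Finset (L × R)), E'.card ≤ n → E' ⊆ E →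
      ∀ N : Finset (L × R), N ⊆ E' → isMatching bconf N →
        p * (1 - p) / (1 + p) * ∑ e ∈ N, w e
          ≤ expSubsets p Finset.univ (fun A => tval E' w A) := by
  have hp1' : (0:ℝ) < 1 + p := by linarith
  have hcp0 : 0 ≤ p * (1 - p) / (1 + p) :=
    div_nonneg (mul_nonneg hp0 (by linarith)) (le_of_lt hp1')
  have hcpe : p * (1 - p) / (1 + p) * (1 + p) = p * (1 - p) :=
    div_mul_cancel₀ _ (ne_of_gt hp1')
  intro n
  induction n with
  | zero =>
    intro E' hcard hsub N hNsub hm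
    have hE' : E' = ∅ := card_eq_zero.mp (Nat.le_zero.mp hcard)
    subst hE'
    have hN : N = ∅ := subset_empty.mp hNsub
    subst hN
    rw [Finset.sum_empty, mul_zero,
      expSubsets_congr (fun A _ => tval_empty A), expSubsets_const]
  | succ n ih =>
    intro E' hcard hsub N hNsub hm
    by_cases hne : E'.Nonempty
    swap
    · rw [Finset.not_nonempty_iff_eq_empty] at hne
      subst hne
      have hN : N = ∅ := subset_empty.mp hNsub
      subst hN
      rw [Finset.sum_empty, mul_zero,
        expSubsets_congr (fun A _ => tval_empty A), expSubsets_const]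
    obtain ⟨em, hem, hmax⟩ := E'.exists_max_image w hne
    have hem0 : 0 ≤ w em := hw0 em (hsub hem)
    have hfree1 : ∀ f ∈ E'.filter (fun f => ¬ bconf em f), f.1 ≠ em.1 :=
      fun f hf h => (mem_filter.mp hf).2 (Or.inl h.symm)
    have hfree0 : ∀ f ∈ E'.filter (fun f => f.1 ≠ em.1), f.1 ≠ em.1 :=
      fun f hf => (mem_filter.mp hf).2
    have hcard1 : (E'.filter (fun f => ¬ bconf em f)).card ≤ n := by
      have : (E'.filter (fun f => ¬ bconf em f)).card < E'.card :=
        card_lt_card ⟨filter_subset _ _,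
          fun hsS => ((mem_filter.mp (hsS hem)).2 (bconf_refl em))⟩
      omega
    have hcard0 : (E'.filter (fun f => f.1 ≠ em.1)).card ≤ n := by
      have : (E'.filter (fun f => f.1 ≠ em.1)).card < E'.card :=
        card_lt_card ⟨filter_subset _ _,
          fun hsS => ((mem_filter.mp (hsS hem)).2 rfl)⟩
      omega
    have hsub1 : E'.filter (fun f => ¬ bconf em f) ⊆ E := (filter_subset _ _).trans hsub
    have hsub0 : E'.filter (fun f => f.1 ≠ em.1) ⊆ E := (filter_subset _ _).trans hsub
    -- the three parts of N
    have hsplitN : ∑ e ∈ N, w e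
        = ∑ e ∈ N.filter (fun e => e.1 = em.1), w e
          + ∑ e ∈ N.filter (fun e => ¬ (e.1 = em.1)), w e :=
      (Finset.sum_filter_add_sum_filter_not N _ w).symm
    have hsplitN0 : ∑ e ∈ N.filter (fun e => ¬ (e.1 = em.1)), w e
        = ∑ e ∈ (N.filter (fun e => ¬ (e.1 = em.1))).filter (fun e => e.2 = em.2), w e
          + ∑ e ∈ (N.filter (fun e => ¬ (e.1 = em.1))).filter (fun e => ¬ (e.2 = em.2)), w e :=
      (Finset.sum_filter_add_sum_filter_not _ _ w).symm
    have hNprime : (N.filter (fun e => ¬ (e.1 = em.1))).filter (fun e => ¬ (e.2 = em.2))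
        = N.filter (fun e => ¬ bconf em e) := by
      rw [Finset.filter_filter]
      ext f
      simp only [mem_filter, bconf, not_or]
      constructor
      · rintro ⟨h1, h2, h3⟩
        exact ⟨h1, fun h => h2 h.symm, fun h => h3 h.symm⟩
      · rintro ⟨h1, h2, h3⟩
        exact ⟨h1, fun h => h2 h.symm, fun h => h3 h.symm⟩
    have ha : ∑ e ∈ N.filter (fun e => e.1 = em.1), w e ≤ w em :=
      matching_filter_sum_le hem0 hmax hNsub hm _ (filter_subset _ _)
        (fun e he f hf => Or.inl (((mem_filter.mp he).2).trans ((mem_filter.mp hf).2).symm))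
    have hb : ∑ e ∈ (N.filter (fun e => ¬ (e.1 = em.1))).filter (fun e => e.2 = em.2), w e
        ≤ w em := by
      exact matching_filter_sum_le hem0 hmax hNsub hm _
        ((filter_subset _ _).trans (filter_subset _ _))
        (fun e he f hf =>
          Or.inr (((mem_filter.mp he).2).trans ((mem_filter.mp hf).2).symm))
    have hb0 : 0 ≤ ∑ e ∈ (N.filter (fun e => ¬ (e.1 = em.1))).filter (fun e => e.2 = em.2), w e :=
      Finset.sum_nonneg fun e he =>
        hw0 e (hsub (hNsub (mem_filter.mp (mem_filter.mp he).1).1))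
    -- split the expectation
    rw [expSubsets_split (mem_univ em.1)]
    -- sampled branch
    have hT1 : expSubsets p (Finset.univ.erase em.1)
          (fun A => tval E' w (insert em.1 A))
        = expSubsets p Finset.univ (fun A => tval (E'.filter (fun f => ¬ bconf em f)) w A) := by
      have e1 : ∀ A ⊆ Finset.univ.erase em.1,
          tval E' w (insert em.1 A) = tval (E'.filter (fun f => ¬ bconf em f)) w A := by
        intro A _
        rw [tval_R1 hsub hinj hem hmax (mem_insert_self _ _), tval_insert_free hfree1]
      rw [expSubsets_congr e1]
      exact (expSubsets_erase (mem_univ em.1)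
        (fun A _ => tval_insert_free hfree1 A)).symm
    have h1 : p * (1 - p) / (1 + p) * ∑ e ∈ N.filter (fun e => ¬ bconf em e), w e
        ≤ expSubsets p (Finset.univ.erase em.1) (fun A => tval E' w (insert em.1 A)) := by
      rw [hT1]
      refine ih (E'.filter (fun f => ¬ bconf em f)) hcard1 hsub1
        (N.filter (fun e => ¬ bconf em e)) ?_ (isMatching_subset (filter_subset _ _) hm)
      intro e he
      obtain ⟨heN, hnb⟩ := mem_filter.mp he
      exact mem_filter.mpr ⟨hNsub heN, hnb⟩
    -- online branch
    have hT0 : expSubsets p (Finset.univ.erase em.1) (fun A => tval E' w A)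
        = expSubsets p Finset.univ (fun A => tval (E'.filter (fun f => f.1 ≠ em.1)) w A)
          + w em * expSubsets p Finset.univ
            (fun A => if (Dset (E'.filter (fun f => f.1 ≠ em.1)) w A em.2).Nonempty
              then (0:ℝ) else 1) := by
      have e0 : ∀ A ⊆ Finset.univ.erase em.1,
          tval E' w A = tval (E'.filter (fun f => f.1 ≠ em.1)) w A
            + w em * (if (Dset (E'.filter (fun f => f.1 ≠ em.1)) w A em.2).Nonempty
              then (0:ℝ) else 1) := by
        intro A hA
        have hAmem : em.1 ∉ A := fun h => (mem_erase.mp (hA h)).1 rfl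
        rw [tval_R2 hsub hinj hem hmax hAmem]
        congr 1
        split <;> ring
      rw [expSubsets_congr e0, expSubsets_add, expSubsets_smul]
      congr 1
      · exact (expSubsets_erase (mem_univ em.1)
          (fun A _ => tval_insert_free hfree0 A)).symm
      · congr 1
        exact (expSubsets_erase (mem_univ em.1)
          (fun A _ => by rw [Dset_insert_free hfree0])).symm
    have h0 : p * (1 - p) / (1 + p) * ∑ e ∈ N.filter (fun e => ¬ (e.1 = em.1)), w e
          + w em * p
        ≤ expSubsets p (Finset.univ.erase em.1) (fun A => tval E' w A) := by
      rw [hT0]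
      refine add_le_add ?_ ?_
      · refine ih (E'.filter (fun f => f.1 ≠ em.1)) hcard0 hsub0
          (N.filter (fun e => ¬ (e.1 = em.1))) ?_
          (isMatching_subset (filter_subset _ _) hm)
        intro e he
        obtain ⟨heN, hnb⟩ := mem_filter.mp he
        exact mem_filter.mpr ⟨hNsub heN, hnb⟩
      · exact mul_le_mul_of_nonneg_left
          (hitE hinj hp0 hp1 (E'.filter (fun f => f.1 ≠ em.1)).card
            (E'.filter (fun f => f.1 ≠ em.1)) le_rfl hsub0 em.2) hem0
    -- combine
    set cp := p * (1 - p) / (1 + p) with hcp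
    set T1 := expSubsets p (Finset.univ.erase em.1) (fun A => tval E' w (insert em.1 A)) with hT1d
    set T0 := expSubsets p (Finset.univ.erase em.1) (fun A => tval E' w A) with hT0d
    set sa := ∑ e ∈ N.filter (fun e => e.1 = em.1), w e with hsa
    set sb := ∑ e ∈ (N.filter (fun e => ¬ (e.1 = em.1))).filter (fun e => e.2 = em.2), w e with hsb
    set sN' := ∑ e ∈ N.filter (fun e => ¬ bconf em e), w e with hsN'
    have hsN0 : ∑ e ∈ N.filter (fun e => ¬ (e.1 = em.1)), w e = sb + sN' := by
      rw [hsplitN0, hNprime]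
    have e1 : p * (cp * sN') ≤ p * T1 := mul_le_mul_of_nonneg_left h1 hp0
    have e0 : (1 - p) * (cp * (sb + sN') + w em * p) ≤ (1 - p) * T0 := by
      refine mul_le_mul_of_nonneg_left ?_ (by linarith)
      rw [← hsN0]
      exact h0
    have hkey : cp * sa + p * (cp * sb) ≤ p * (1 - p) * w em := by
      have k1 : cp * sa ≤ cp * w em := mul_le_mul_of_nonneg_left ha hcp0
      have k2 : p * (cp * sb) ≤ p * (cp * w em) :=
        mul_le_mul_of_nonneg_left (mul_le_mul_of_nonneg_left hb hcp0) hp0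
      have k3 : cp * w em + p * (cp * w em) = p * (1 - p) * w em := by
        have : cp * w em + p * (cp * w em) = (cp * (1 + p)) * w em := by ring
        rw [this, hcpe]
      linarith
    have hgoal : cp * ∑ e ∈ N, w e
        = p * (cp * sN') + (1 - p) * (cp * (sb + sN') + w em * p)
          + (cp * sa + p * (cp * sb)) - p * (1 - p) * w em := by
      rw [hsplitN, hsN0]
      ring
    rw [hgoal]
    linarith
end MainInd

section Algo

variable {L R : Type*} [Fintype L] [DecidableEq L] [DecidableEq R]
variable {E : Finset (L × R)} {w : L × R → ℝ} {A : Finset L}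

lemma stepB_subset (M : Finset (L × R)) (u : L) : M ⊆ stepB E w A M u :=
  subset_union_left

lemma foldl_stepB_subset :
    ∀ (l : List L) (M : Finset (L × R)), M ⊆ l.foldl (stepB E w A) M := by
  intro l
  induction l with
  | nil => intro M; simp [List.foldl]
  | cons u t ih =>
    intro M
    rw [List.foldl_cons]
    exact (stepB_subset M u).trans (ih (stepB E w A M u))

lemma mem_foldl_stepB :
    ∀ (l : List L) (M : Finset (L × R)) (e : L × R), e ∈ l.foldl (stepB E w A) M →
      e ∈ M ∨ ∃ u ∈ l, e ∈ greedy w bconf (subL E (insert u A)) ∧ e.1 = u := by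
  intro l
  induction l with
  | nil => intro M e he; simp at he; exact Or.inl he
  | cons u t ih =>
    intro M e he
    rw [List.foldl_cons] at he
    rcases ih (stepB E w A M u) e he with h | ⟨u', hu', hg, h1⟩
    · rcases mem_union.mp h with h | h
      · exact Or.inl h
      · obtain ⟨hg, h1, -⟩ := mem_filter.mp h
        exact Or.inr ⟨u, List.mem_cons_self, hg, h1⟩
    · exact Or.inr ⟨u', List.mem_cons_of_mem u hu', hg, h1⟩

lemma sndInj_stepB {M : Finset (L × R)} {u : L}
    (hQ : ∀ e ∈ M, ∀ f ∈ M, e ≠ f → e.2 ≠ f.2) :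
    ∀ e ∈ stepB E w A M u, ∀ f ∈ stepB E w A M u, e ≠ f → e.2 ≠ f.2 := by
  intro e he f hf hne
  rcases mem_union.mp he with heM | heF
  · rcases mem_union.mp hf with hfM | hfF
    · exact hQ e heM f hfM hne
    · exact (mem_filter.mp hfF).2.2 e heM
  · rcases mem_union.mp hf with hfM | hfF
    · exact fun h2 => (mem_filter.mp heF).2.2 f hfM h2.symm
    · intro h2
      exact hne (Prod.ext_iff.mpr
        ⟨(mem_filter.mp heF).2.1.trans (mem_filter.mp hfF).2.1.symm, h2⟩)

lemma sndInj_foldl :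
    ∀ (l : List L) (M : Finset (L × R)),
      (∀ e ∈ M, ∀ f ∈ M, e ≠ f → e.2 ≠ f.2) →
      ∀ e ∈ l.foldl (stepB E w A) M, ∀ f ∈ l.foldl (stepB E w A) M, e ≠ f → e.2 ≠ f.2 := by
  intro l
  induction l with
  | nil => intro M hQ; simpa [List.foldl] using hQ
  | cons u t ih =>
    intro M hQ
    rw [List.foldl_cons]
    exact ih _ (sndInj_stepB hQ)

lemma exists_hit :
    ∀ (l : List L) (M : Finset (L × R)) (d : L × R),
      d ∈ greedy w bconf (subL E (insert d.1 A)) → d.1 ∈ l →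
      ∃ e ∈ l.foldl (stepB E w A) M, e.2 = d.2 := by
  intro l
  induction l with
  | nil => intro M d _ h; simp at h
  | cons u t ih =>
    intro M d hd hmem
    rw [List.foldl_cons]
    by_cases hu : d.1 ∈ t
    · exact ih _ d hd hu
    · have hdu : d.1 = u := by
        rcases List.mem_cons.mp hmem with h | h
        · exact h
        · exact absurd h hu
      have hstep : ∃ e ∈ stepB E w A M u, e.2 = d.2 := by
        by_cases hfree : ∀ f ∈ M, f.2 ≠ d.2
        · refine ⟨d, mem_union_right _ (mem_filter.mpr ⟨?_, hdu, hfree⟩), rfl⟩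
          rw [← hdu]
          exact hd
        · push_neg at hfree
          obtain ⟨f, hf, hf2⟩ := hfree
          exact ⟨f, mem_union_left _ hf, hf2⟩
      obtain ⟨e, he, h2⟩ := hstep
      exact ⟨e, foldl_stepB_subset t _ he, h2⟩

lemma tval_le_runB (hw0 : ∀ e ∈ E, 0 ≤ w e) (l : List L)
    (hl : ∀ u : L, u ∈ l ↔ u ∉ A) :
    tval E w A ≤ ∑ e ∈ runB E w A l, w e := by
  have hMD : ∀ e ∈ runB E w A l, e ∈ Dset E w A e.2 := by
    intro e he
    rcases mem_foldl_stepB l ∅ e he with h | ⟨u, hu, hg, h1⟩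
    · exact absurd h (notMem_empty e)
    · have huA : u ∉ A := (hl u).mp hu
      refine mem_Dset.mpr ⟨subL_subset _ _ (greedy_subset _ _ _ hg), rfl, ?_, ?_⟩
      · rw [h1]; exact huA
      · rw [h1]; exact hg
  have hQ : ∀ e ∈ runB E w A l, ∀ f ∈ runB E w A l, e ≠ f → e.2 ≠ f.2 :=
    sndInj_foldl l ∅ (fun e he => absurd he (notMem_empty e))
  have hs : (E.image Prod.snd).filter (fun r => (Dset E w A r).Nonempty)
      ⊆ (runB E w A l).image Prod.snd := by
    intro r hr
    obtain ⟨d, hd⟩ := (mem_filter.mp hr).2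
    obtain ⟨hdE, hd2, hd1, hdg⟩ := mem_Dset.mp hd
    have hdl : d.1 ∈ l := (hl d.1).mpr hd1
    obtain ⟨e, he, h2⟩ := exists_hit l ∅ d hdg hdl
    exact mem_image.mpr ⟨e, he, by rw [h2, hd2]⟩
  have step1 : tval E w A
      = ∑ r ∈ (E.image Prod.snd).filter (fun r => (Dset E w A r).Nonempty),
          Yval E w A r := by
    unfold tval
    rw [← Finset.sum_filter_add_sum_filter_not (E.image Prod.snd)
      (fun r => (Dset E w A r).Nonempty) (Yval E w A)]
    have hz : ∑ r ∈ (E.image Prod.snd).filter (fun r => ¬ (Dset E w A r).Nonempty),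
        Yval E w A r = 0 :=
      Finset.sum_eq_zero fun r hr => dif_neg (mem_filter.mp hr).2
    rw [hz, add_zero]
  have step2 : ∑ r ∈ (E.image Prod.snd).filter (fun r => (Dset E w A r).Nonempty),
        Yval E w A r
      ≤ ∑ r ∈ (runB E w A l).image Prod.snd, Yval E w A r :=
    Finset.sum_le_sum_of_subset_of_nonneg hs (fun r _ _ => Yval_nonneg hw0)
  have step3 : ∑ r ∈ (runB E w A l).image Prod.snd, Yval E w A r
      = ∑ e ∈ runB E w A l, Yval E w A e.2 :=
    Finset.sum_image fun e heM f hfM hef => by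
      by_contra hne
      exact hQ e heM f hfM hne hef
  have step4 : ∑ e ∈ runB E w A l, Yval E w A e.2 ≤ ∑ e ∈ runB E w A l, w e :=
    Finset.sum_le_sum fun e he => Yval_le_of_mem (hMD e he)
  rw [step1]
  exact le_trans step2 (le_of_eq step3 |>.trans step4)

end Algo

end Stmt5Aux

/-- The greedy-based online algorithm with vertex-sampling probability
`p` is order-oblivious `p(1-p)/(1+p)`-competitive: for every arrival-order rule `σ` for
the vertices of `L \ L'` (possibly depending on the sample `L'`), the expected weight of
its output matching is at least `p(1-p)/(1+p) · OPT(G)`. -/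
theorem stmt5 {L R : Type*} [Fintype L] [DecidableEq L] [DecidableEq R]
    (E : Finset (L × R)) (w : L × R → ℝ)
    (hw0 : ∀ e ∈ E, 0 ≤ w e) (hwinj : Set.InjOn w ↑E)
    (p : ℝ) (hp : p ∈ Set.Icc (0 : ℝ) 1)
    (σ : Finset L → List L)
    (hσ : ∀ A : Finset L, (σ A).Perm (Finset.univ \ A).toList) :
    expSubsets p Finset.univ (fun A => ∑ e ∈ runB E w A (σ A), w e)
      ≥ (p * (1 - p) / (1 + p)) * optWeight w bconf E := by
  obtain ⟨hp0, hp1⟩ := hp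
  obtain ⟨N, hN, hNval⟩ := Finset.exists_mem_eq_sup'
    (⟨∅, Finset.mem_filter.mpr ⟨Finset.empty_mem_powerset _,
        fun e he => absurd he (Finset.notMem_empty e)⟩⟩ :
      (E.powerset.filter fun M => isMatching bconf M).Nonempty)
    (fun M => ∑ e ∈ M, w e)
  have hopt : optWeight w bconf E = ∑ e ∈ N, w e := hNval
  rw [ge_iff_le, hopt]
  have hmain := Stmt5Aux.mainInd hw0 hwinj hp0 hp1 E.card E le_rfl subset_rfl N
    (Finset.mem_powerset.mp (Finset.mem_filter.mp hN).1) (Finset.mem_filter.mp hN).2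
  refine le_trans hmain (Stmt5Aux.expSubsets_mono hp0 hp1 ?_)
  intro A _
  refine Stmt5Aux.tval_le_runB hw0 (σ A) ?_
  intro u
  rw [(hσ A).mem_iff, Finset.mem_toList, Finset.mem_sdiff]
  simp
end
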